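/- arXiv:2107.14413 — 3 statements merged into one kernel-verified Lean document; each statement's English description precedes it below -/
import Mathlib

section
/- Let L be an m×k full-rank matrix over F_q, let s(L) denote the minimal support size of a nonzero vector in the row space of L, and call B ⊆ [k] good if B is (t+1)-rank-reducing where |B| = s(L) + t for some t ≥ 0. Then every subset B' of a good set B with |B'| ≥ s(L) is itself good. -/
open scoped BigOperators Classical

/-- The number of nonzero coordinates (support size) of a vector. -/
noncomputable def suppCard {F : Type*} [Field F] {k : ℕ} (v : Fin k → F) : ℕ :=
  (Finset.univ.filter fun j => v j ≠ 0).card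

/-- `s(L)`: the minimal support size of a nonzero vector in the row space of `L`,
i.e. the minimal length of an equation induced by `L`. -/
noncomputable def minLen {F : Type*} [Field F] {m k : ℕ} (L : Matrix (Fin m) (Fin k) F) : ℕ :=
  sInf {c | ∃ v ∈ Submodule.span F (Set.range fun i => L i), v ≠ 0 ∧ suppCard v = c}

/-- The rank of the matrix obtained from `L` by deleting the columns indexed by `B`. -/
noncomputable def delRank {F : Type*} [Field F] [Fintype F] {m k : ℕ}
    (L : Matrix (Fin m) (Fin k) F) (B : Finset (Fin k)) : ℕ :=
  (L.submatrix id (fun j : {j : Fin k // j ∉ B} => (j : Fin k))).rank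

/-- `B` is good for `L`: writing `|B| = s(L) + t` with `t ≥ 0`, deleting the columns
indexed by `B` decreases the rank by exactly `t + 1`. -/
noncomputable def Good {F : Type*} [Field F] [Fintype F] {m k : ℕ}
    (L : Matrix (Fin m) (Fin k) F) (B : Finset (Fin k)) : Prop :=
  minLen L ≤ B.card ∧ delRank L B + (B.card - minLen L + 1) = m

/-!
Let `R` be the row space of `L` and `W_C ⊆ R` the subspace of vectors supported in `C`.
Rank–nullity for the restriction to the columns outside `C` gives `delRank L C = m - dim W_C`,
so `C` is good iff `dim W_C = |C| - s + 1`. This is always an upper bound (Singleton bound: a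
vector of `W_C` vanishing on all but `s - 1` coordinates of `C` is zero), while forcing the
`|B \ B'|` extra coordinates to vanish lowers the dimension by at most `|B \ B'|`. Hence
`dim W_B' ≥ |B'| - s + 1`, with equality.
-/

open Module

lemma Submodule.finrank_map_add_finrank_inf_ker {K V V₂ : Type*} [DivisionRing K]
    [AddCommGroup V] [Module K V] [AddCommGroup V₂] [Module K V₂] [FiniteDimensional K V]
    (f : V →ₗ[K] V₂) (W : Submodule K V) :
    finrank K (W.map f) + finrank K (W ⊓ LinearMap.ker f : Submodule K V) = finrank K W := by
  have h := (f.comp W.subtype).finrank_range_add_finrank_ker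
  rwa [LinearMap.range_comp, Submodule.range_subtype, LinearMap.ker_comp,
    ((Submodule.comap W.subtype (LinearMap.ker f)).equivMapOfInjective W.subtype
      W.injective_subtype).finrank_eq, Submodule.map_comap_subtype] at h

lemma LinearMap.ker_funLeft_subtype (R M : Type*) {ι : Type*} [Semiring R] [AddCommMonoid M]
    [Module R M] (D : Set ι) :
    LinearMap.ker (LinearMap.funLeft R M ((↑) : D → ι)) = Submodule.pi D fun _ => ⊥ := by
  ext v
  simp [Submodule.mem_pi, funext_iff]

section

variable {K ι : Type*} [Field K]

lemma finrank_le_card_add_finrank_inf_pi_bot [Fintype ι] (W : Submodule K (ι → K))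
    (D : Finset ι) :
    finrank K W ≤
      D.card + finrank K (W ⊓ Submodule.pi (D : Set ι) fun _ => ⊥ : Submodule K (ι → K)) := by
  set restrict := LinearMap.funLeft K K ((↑) : ↥(D : Set ι) → ι)
  have hmap : finrank K (W.map restrict) ≤ D.card := by
    simpa using Submodule.finrank_le (W.map restrict)
  have hsum := Submodule.finrank_map_add_finrank_inf_ker restrict W
  rw [LinearMap.ker_funLeft_subtype] at hsum
  omega

def supportedIn (R : Submodule K (ι → K)) (C : Finset ι) : Submodule K (ι → K) :=
  R ⊓ Submodule.pi {j | j ∉ C} fun _ => ⊥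

lemma finrank_supportedIn_le_card_sdiff_add [Fintype ι] [DecidableEq ι]
    (R : Submodule K (ι → K)) (C C' : Finset ι) :
    finrank K (supportedIn R C) ≤ (C \ C').card + finrank K (supportedIn R C') := by
  refine (finrank_le_card_add_finrank_inf_pi_bot _ (C \ C')).trans
    (Nat.add_le_add_left (Submodule.finrank_mono ?_) _)
  rintro v ⟨⟨hvR, hvC⟩, hvD⟩
  refine ⟨hvR, fun j hj => ?_⟩
  by_cases hjC : j ∈ C
  · exact hvD j (Finset.mem_sdiff.mpr ⟨hjC, hj⟩)
  · exact hvC j hjC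

lemma suppCard_pos {k : ℕ} {v : Fin k → K} (hv : v ≠ 0) : 0 < suppCard v := by
  obtain ⟨j, hj⟩ := Function.ne_iff.mp hv
  exact Finset.card_pos.mpr ⟨j, by simpa using hj⟩

lemma finrank_supportedIn_add_le {k : ℕ} (R : Submodule K (Fin k → K)) {s : ℕ}
    (hmin : ∀ v ∈ R, v ≠ 0 → s ≤ suppCard v) (C : Finset (Fin k)) (hs : s ≤ C.card + 1) :
    finrank K (supportedIn R C) + s ≤ C.card + 1 := by
  obtain ⟨S, hSC, hS⟩ := Finset.exists_subset_card_eq (show s - 1 ≤ C.card by omega)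
  have hbot : (supportedIn R C ⊓ Submodule.pi ((C \ S : Finset _) : Set _) fun _ => ⊥ :
      Submodule K (Fin k → K)) = ⊥ := by
    refine (Submodule.eq_bot_iff _).mpr fun v ⟨⟨hvR, hvC⟩, hvD⟩ => ?_
    by_contra hv
    have hsupp : suppCard v ≤ S.card := by
      refine Finset.card_le_card fun j hj => ?_
      by_contra hjS
      by_cases hjC : j ∈ C
      · exact (Finset.mem_filter.mp hj).2 (hvD j (by simp [hjC, hjS]))
      · exact (Finset.mem_filter.mp hj).2 (hvC j hjC)
    have hs_le := hmin v hvR hv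
    have hpos := suppCard_pos hv
    omega
  have hle := finrank_le_card_add_finrank_inf_pi_bot (supportedIn R C) (C \ S)
  rw [hbot, finrank_bot, Finset.card_sdiff_of_subset hSC] at hle
  omega

end

lemma delRank_add_finrank_supportedIn {K : Type*} [Field K] [Fintype K] {m k : ℕ}
    (L : Matrix (Fin m) (Fin k) K) (C : Finset (Fin k)) :
    delRank L C + finrank K (supportedIn (Submodule.span K (Set.range L.row)) C) =
      L.rank := by
  have hsum := Submodule.finrank_map_add_finrank_inf_ker
    (LinearMap.funLeft K K ((↑) : {j | j ∉ C} → Fin k)) (Submodule.span K (Set.range L.row))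
  rw [LinearMap.ker_funLeft_subtype, Submodule.map_span, ← Set.range_comp] at hsum
  rwa [delRank, Matrix.rank_eq_finrank_span_row, L.rank_eq_finrank_span_row]

lemma minLen_le_suppCard {K : Type*} [Field K] {m k : ℕ} (L : Matrix (Fin m) (Fin k) K)
    {v : Fin k → K} (hv : v ∈ Submodule.span K (Set.range L.row)) (hv0 : v ≠ 0) :
    minLen L ≤ suppCard v :=
  Nat.sInf_le ⟨v, hv, hv0, rfl⟩

/-- every subset `B'` of a good set `B` with `|B'| ≥ s(L)` is itself good. -/
theorem subset_of_good_is_good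
    {F : Type*} [Field F] [Fintype F] {m k : ℕ} (L : Matrix (Fin m) (Fin k) F)
    (hrank : L.rank = m)
    (B B' : Finset (Fin k)) (hB : Good L B) (hsub : B' ⊆ B) (hcard : minLen L ≤ B'.card) :
    Good L B' := by
  obtain ⟨-, hB⟩ := hB
  have hdelB := delRank_add_finrank_supportedIn L B
  have hdelB' := delRank_add_finrank_supportedIn L B'
  rw [hrank] at hdelB hdelB'
  have hupper := finrank_supportedIn_add_le _ (fun v => minLen_le_suppCard L) B' (by omega)
  have hlower := finrank_supportedIn_le_card_sdiff_add (Submodule.span F (Set.range L.row)) B B'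
  have hsdiff := Finset.card_sdiff_of_subset hsub
  have hcard_le := Finset.card_le_card hsub
  exact ⟨hcard, by omega⟩
end

section
/- Let X be a random variable taking values in a finite set S, and let Y be a copy of X that is conditionally independent of X given f(X) = f(Y), for some function f on S. Then the Shannon entropy satisfies H(X,Y) = 2H(X) − H(f(X)). -/
open scoped BigOperators Classical

/-- Shannon entropy of a probability mass function on a finite type
(with the convention `0 · log 0 = 0`, which holds since `Real.log 0 = 0`). -/
noncomputable def shannonEntropy {α : Type*} [Fintype α] (μ : α → ℝ) : ℝ :=
  -∑ a, μ a * Real.log (μ a)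

/-- Pushforward of a pmf along a map `f`: the distribution of `f(X)`. -/
noncomputable def pushPMF {α β : Type*} [Fintype α] (f : α → β) (μ : α → ℝ) : β → ℝ :=
  fun b => ∑ a ∈ Finset.univ.filter (fun a => f a = b), μ a

/-- The joint distribution of `(X, Y)` where `Y` is a copy of `X` conditionally
independent of `X` given `f(X) = f(Y)`:
`P((X,Y)=(x,y)) = 1_{f(x)=f(y)} · P(f(X)=f(x)) · P(X=x | f(X)=f(x)) · P(X=y | f(X)=f(x))`. -/
noncomputable def condIndepJoint {α β : Type*} [Fintype α] (f : α → β) (μ : α → ℝ) :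
    α × α → ℝ :=
  fun p => if f p.1 = f p.2 then
    pushPMF f μ (f p.1) * (μ p.1 / pushPMF f μ (f p.1)) * (μ p.2 / pushPMF f μ (f p.1))
  else 0

/-- if `Y` is a conditionally independent copy of `X` given `f(X) = f(Y)`,
then `H(X,Y) = 2 H(X) − H(f(X))`. -/
theorem entropy_cond_indep_copy {α β : Type*} [Fintype α] [Fintype β]
    (μ : α → ℝ) (hpos : ∀ a, 0 ≤ μ a) (hsum : ∑ a, μ a = 1) (f : α → β) :
    shannonEntropy (condIndepJoint f μ) = 2 * shannonEntropy μ - shannonEntropy (pushPMF f μ) := by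
  classical
  set Q : β → ℝ := pushPMF f μ with hQdef
  have hQx : ∀ x : α, Q (f x) = ∑ y ∈ Finset.univ.filter (fun y => f x = f y), μ y := by
    intro x
    simp only [hQdef, pushPMF]
    apply Finset.sum_congr
    · ext y; simp [eq_comm]
    · intro _ _; rfl
  have hle : ∀ x : α, μ x ≤ Q (f x) := by
    intro x
    rw [hQx x]
    exact Finset.single_le_sum (fun i _ => hpos i) (by simp)
  -- pointwise formula for the joint
  have hJ : ∀ p : α × α, condIndepJoint f μ p =
      if f p.1 = f p.2 then μ p.1 * μ p.2 / Q (f p.1) else 0 := by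
    intro p
    simp only [condIndepJoint, ← hQdef]
    split_ifs with h
    · by_cases hq : Q (f p.1) = 0
      · simp [hq]
      · field_simp
    · rfl
  -- key splitting of each summand
  have expand : ∀ x y : α,
      (if f x = f y then μ x * μ y / Q (f x) else 0) *
        Real.log (if f x = f y then μ x * μ y / Q (f x) else 0) =
      (if f x = f y then μ x * μ y / Q (f x) * Real.log (μ x) else 0) +
      (if f x = f y then μ x * μ y / Q (f x) * Real.log (μ y) else 0) -
      (if f x = f y then μ x * μ y / Q (f x) * Real.log (Q (f x)) else 0) := by
    intro x y
    split_ifs with h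
    · by_cases hx : μ x = 0
      · simp [hx]
      by_cases hy : μ y = 0
      · simp [hy]
      have hxpos : 0 < μ x := lt_of_le_of_ne (hpos x) (Ne.symm hx)
      have hQpos : 0 < Q (f x) := lt_of_lt_of_le hxpos (hle x)
      have hQne : Q (f x) ≠ 0 := ne_of_gt hQpos
      rw [Real.log_div (mul_ne_zero hx hy) hQne, Real.log_mul hx hy]
      ring
    · simp
  -- the three partial sums
  have hA : ∀ (c : ℝ) (x : α),
      ∑ y, (if f x = f y then μ x * c / Q (f x) * μ y else 0) = μ x * c := by
    intro c x
    rw [← Finset.sum_filter, ← Finset.mul_sum, ← hQx x]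
    by_cases hq : Q (f x) = 0
    · have hx0 : μ x = 0 := le_antisymm (hq ▸ hle x) (hpos x)
      simp [hx0]
    · field_simp
  have hAs : ∀ x : α,
      ∑ y, (if f x = f y then μ x * μ y / Q (f x) * Real.log (μ x) else 0)
        = μ x * Real.log (μ x) := by
    intro x
    rw [← hA (Real.log (μ x)) x]
    apply Finset.sum_congr rfl
    intro y _
    split_ifs
    · ring
    · rfl
  have hCs : ∀ x : α,
      ∑ y, (if f x = f y then μ x * μ y / Q (f x) * Real.log (Q (f x)) else 0)
        = μ x * Real.log (Q (f x)) := by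
    intro x
    rw [← hA (Real.log (Q (f x))) x]
    apply Finset.sum_congr rfl
    intro y _
    split_ifs
    · ring
    · rfl
  have hBs : ∑ x, ∑ y, (if f x = f y then μ x * μ y / Q (f x) * Real.log (μ y) else 0)
      = ∑ y, μ y * Real.log (μ y) := by
    rw [Finset.sum_comm]
    apply Finset.sum_congr rfl
    intro y _
    rw [← hA (Real.log (μ y)) y]
    apply Finset.sum_congr rfl
    intro x _
    by_cases h : f x = f y
    · rw [if_pos h, if_pos h.symm, h]
      ring
    · rw [if_neg h, if_neg (Ne.symm h)]
  -- C equals ∑_b Q b log Q b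
  have hC2 : ∑ x, μ x * Real.log (Q (f x)) = ∑ b, Q b * Real.log (Q b) := by
    rw [← Finset.sum_fiberwise (Finset.univ) f (fun x => μ x * Real.log (Q (f x)))]
    apply Finset.sum_congr rfl
    intro b _
    have : ∀ x ∈ Finset.univ.filter (fun x => f x = b),
        μ x * Real.log (Q (f x)) = μ x * Real.log (Q b) := by
      intro x hx
      rw [(Finset.mem_filter.mp hx).2]
    rw [Finset.sum_congr rfl this, ← Finset.sum_mul]
    simp only [hQdef, pushPMF]
  -- assemble
  have main : ∑ p : α × α, condIndepJoint f μ p * Real.log (condIndepJoint f μ p)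
      = (∑ x, μ x * Real.log (μ x)) + (∑ x, μ x * Real.log (μ x))
        - (∑ b, Q b * Real.log (Q b)) := by
    calc ∑ p : α × α, condIndepJoint f μ p * Real.log (condIndepJoint f μ p)
        = ∑ x, ∑ y, (if f x = f y then μ x * μ y / Q (f x) else 0) *
            Real.log (if f x = f y then μ x * μ y / Q (f x) else 0) := by
          rw [Fintype.sum_prod_type]
          apply Finset.sum_congr rfl; intro x _
          apply Finset.sum_congr rfl; intro y _
          rw [hJ (x, y)]
      _ = ∑ x, ((∑ y, (if f x = f y then μ x * μ y / Q (f x) * Real.log (μ x) else 0))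
            + (∑ y, (if f x = f y then μ x * μ y / Q (f x) * Real.log (μ y) else 0))
            - (∑ y, (if f x = f y then μ x * μ y / Q (f x) * Real.log (Q (f x)) else 0))) := by
          apply Finset.sum_congr rfl; intro x _
          rw [← Finset.sum_add_distrib, ← Finset.sum_sub_distrib]
          apply Finset.sum_congr rfl; intro y _
          exact expand x y
      _ = (∑ x, μ x * Real.log (μ x)) + (∑ x, μ x * Real.log (μ x))
            - (∑ b, Q b * Real.log (Q b)) := by
          rw [Finset.sum_sub_distrib, Finset.sum_add_distrib, hBs, ← hC2]
          congr 1
          congr 1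
          · exact Finset.sum_congr rfl (fun x _ => hAs x)
          · exact Finset.sum_congr rfl (fun x _ => hCs x)
  simp only [shannonEntropy, main, ← hQdef]
  ring
end

section
/- For any n and any function f: F_q^n → [0,1], Σ_{h ≠ 0} f̂(h) f̂(2h) f̂(3h) f̂(−6h) ≤ Σ_{h ≠ 0} |f̂(h)|² |f̂(2h)|², where the sums run over nonzero characters h of F_q^n and q is a prime power coprime to 6. Consequently Σ_{h≠0} [2|f̂(h)|²|f̂(2h)|² + |f̂(h)|²|f̂(3h)|² + 2 f̂(h)f̂(2h)f̂(3h)f̂(−6h)] ≥ 0. -/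
/-!
Writing `u h = f̂(h) f̂(2h)` and `v h = f̂(3h) f̂(-6h)`, the left sum is `Σ u v`. Since
`f̂(-r)` is the conjugate of `f̂(r)`, `‖v h‖ = ‖u (3h)‖`, and as `h ↦ 3h` permutes the nonzero
frequencies, `Σ ‖v‖² = Σ ‖u‖²`. Cauchy–Schwarz then bounds `|Re Σ u v|` by `Σ ‖u‖²`, which
gives both inequalities.
-/

open scoped BigOperators Classical

/-- The Fourier transform of `f : F^n → ℝ` at the frequency `r ∈ F^n`, with respect to a
fixed primitive additive character `ψ` of the finite field `F` (for `F = F_q`, the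
standard choice is `ψ = e_p(Tr(·))`, giving `f̂(r) = E_x f(x) e_p(−Tr(r·x))`). -/
noncomputable def fhat {F : Type*} [Field F] [Fintype F] (ψ : AddChar F ℂ) {n : ℕ}
    (f : (Fin n → F) → ℝ) (r : Fin n → F) : ℂ :=
  (∑ x : Fin n → F, (f x : ℂ) * ψ (-(∑ i, r i * x i))) / (Fintype.card F : ℂ) ^ n

open Finset

theorem natCast_ne_zero_of_coprime_card {F : Type*} [Field F] [Fintype F] {m : ℕ}
    (hm : Nat.Coprime (Fintype.card F) m) : (m : F) ≠ 0 := by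
  intro h
  have hcard := (ringChar.spec F _).1 (FiniteField.cast_card_eq_zero F)
  have hchar : ringChar F ∣ 1 := hm ▸ Nat.dvd_gcd hcard ((ringChar.spec F m).1 h)
  exact CharP.ringChar_ne_one (Nat.eq_one_of_dvd_one hchar)

theorem sum_filter_ne_zero_comp_smul {K V M : Type*} [DivisionRing K] [AddCommGroup V]
    [Module K V] [Fintype V] [DecidablePred (· ≠ (0 : V))] [AddCommMonoid M] {c : K} (hc : c ≠ 0)
    (g : V → M) :
    ∑ h ∈ univ.filter (· ≠ 0), g (c • h) = ∑ h ∈ univ.filter (· ≠ 0), g h :=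
  sum_nbij' (c • ·) (c⁻¹ • ·) (by simp [hc]) (by simp [hc]) (by simp [smul_smul, hc])
    (by simp [smul_smul, hc]) (fun _ _ => rfl)

theorem norm_sum_mul_le_of_sum_norm_sq_eq {ι R : Type*} [SeminormedRing R] (s : Finset ι)
    (u v : ι → R) (huv : ∑ i ∈ s, ‖v i‖ ^ 2 = ∑ i ∈ s, ‖u i‖ ^ 2) :
    ‖∑ i ∈ s, u i * v i‖ ≤ ∑ i ∈ s, ‖u i‖ ^ 2 := by
  have hcs := sum_mul_sq_le_sq_mul_sq s (‖u ·‖) (‖v ·‖)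
  rw [huv, ← sq] at hcs
  calc ‖∑ i ∈ s, u i * v i‖ ≤ ∑ i ∈ s, ‖u i‖ * ‖v i‖ :=
        (norm_sum_le _ _).trans (sum_le_sum fun i _ => norm_mul_le _ _)
    _ ≤ ∑ i ∈ s, ‖u i‖ ^ 2 :=
        abs_le_of_sq_le_sq hcs (sum_nonneg fun i _ => by positivity) |>.trans' (le_abs_self _)

section Fourier

variable {F : Type*} [Field F] [Fintype F] (ψ : AddChar F ℂ) {n : ℕ} (f : (Fin n → F) → ℝ)

theorem fhat_neg (r : Fin n → F) : fhat ψ f (-r) = starRingEnd ℂ (fhat ψ f r) := by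
  simp only [fhat, map_div₀, map_sum, map_mul, Complex.conj_ofReal, map_pow,
    Complex.conj_natCast, ← AddChar.map_neg_eq_conj, neg_neg, Pi.neg_apply, neg_mul,
    sum_neg_distrib]

theorem norm_fhat_neg (r : Fin n → F) : ‖fhat ψ f (-r)‖ = ‖fhat ψ f r‖ := by
  rw [fhat_neg, Complex.norm_conj]

end Fourier

theorem cauchy_schwarz_fourier_bound_general
    {F : Type*} [Field F] [Fintype F] (hq : Nat.Coprime (Fintype.card F) 6)
    (ψ : AddChar F ℂ)
    (n : ℕ) (f : (Fin n → F) → ℝ) :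
    (∑ h ∈ Finset.univ.filter (fun h : Fin n → F => h ≠ 0),
        fhat ψ f h * fhat ψ f ((2 : F) • h) * fhat ψ f ((3 : F) • h) *
          fhat ψ f ((-6 : F) • h)).re ≤
      (∑ h ∈ Finset.univ.filter (fun h : Fin n → F => h ≠ 0),
        ‖fhat ψ f h‖ ^ 2 * ‖fhat ψ f ((2 : F) • h)‖ ^ 2) ∧
    0 ≤
      (∑ h ∈ Finset.univ.filter (fun h : Fin n → F => h ≠ 0),
        (2 * ‖fhat ψ f h‖ ^ 2 * ‖fhat ψ f ((2 : F) • h)‖ ^ 2 +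
          ‖fhat ψ f h‖ ^ 2 * ‖fhat ψ f ((3 : F) • h)‖ ^ 2)) +
      2 * (∑ h ∈ Finset.univ.filter (fun h : Fin n → F => h ≠ 0),
        fhat ψ f h * fhat ψ f ((2 : F) • h) * fhat ψ f ((3 : F) • h) *
          fhat ψ f ((-6 : F) • h)).re := by
  set s := univ.filter (fun h : Fin n → F => h ≠ 0)
  set u : (Fin n → F) → ℂ := fun h => fhat ψ f h * fhat ψ f ((2 : F) • h)
  have h3 : (3 : F) ≠ 0 := by
    exact_mod_cast natCast_ne_zero_of_coprime_card (hq.coprime_dvd_right (by norm_num : 3 ∣ 6))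
  have hv : ∀ h, ‖fhat ψ f ((3 : F) • h) * fhat ψ f ((-6 : F) • h)‖ = ‖u ((3 : F) • h)‖ := by
    intro h
    rw [show (-6 : F) • h = -((2 : F) • (3 : F) • h) by rw [smul_smul, ← neg_smul]; norm_num,
      norm_mul, norm_mul, norm_fhat_neg]
  have hbound := norm_sum_mul_le_of_sum_norm_sq_eq s u
    (fun h => fhat ψ f ((3 : F) • h) * fhat ψ f ((-6 : F) • h))
    (by simp only [hv]; exact sum_filter_ne_zero_comp_smul h3 (‖u ·‖ ^ 2))
  simp only [u, norm_mul, mul_pow, ← mul_assoc] at hbound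
  have hre := (abs_le.mp ((Complex.abs_re_le_norm _).trans hbound))
  have hB : 0 ≤ ∑ h ∈ s, ‖fhat ψ f h‖ ^ 2 * ‖fhat ψ f ((3 : F) • h)‖ ^ 2 :=
    sum_nonneg fun h _ => by positivity
  refine ⟨hre.2, ?_⟩
  rw [sum_add_distrib]
  simp only [mul_assoc, ← mul_sum] at hre ⊢
  linarith [hre.1]

/-- Example 4.5: for a prime power `q` coprime to 6 and `f : F^n → [0,1]`,
Cauchy–Schwarz together with the substitution `h ↦ 3h` gives
`Σ_{h≠0} f̂(h)f̂(2h)f̂(3h)f̂(−6h) ≤ Σ_{h≠0} |f̂(h)|²|f̂(2h)|²` (the left sum being real),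
and consequently
`Σ_{h≠0} [2|f̂(h)|²|f̂(2h)|² + |f̂(h)|²|f̂(3h)|² + 2 f̂(h)f̂(2h)f̂(3h)f̂(−6h)] ≥ 0`. -/
theorem cauchy_schwarz_fourier_bound
    {F : Type*} [Field F] [Fintype F] (hq : Nat.Coprime (Fintype.card F) 6)
    (ψ : AddChar F ℂ) (hψ : ψ.IsPrimitive)
    (n : ℕ) (f : (Fin n → F) → ℝ) (hf : ∀ x, 0 ≤ f x ∧ f x ≤ 1) :
    (∑ h ∈ Finset.univ.filter (fun h : Fin n → F => h ≠ 0),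
        fhat ψ f h * fhat ψ f ((2 : F) • h) * fhat ψ f ((3 : F) • h) *
          fhat ψ f ((-6 : F) • h)).re ≤
      (∑ h ∈ Finset.univ.filter (fun h : Fin n → F => h ≠ 0),
        ‖fhat ψ f h‖ ^ 2 * ‖fhat ψ f ((2 : F) • h)‖ ^ 2) ∧
    0 ≤
      (∑ h ∈ Finset.univ.filter (fun h : Fin n → F => h ≠ 0),
        (2 * ‖fhat ψ f h‖ ^ 2 * ‖fhat ψ f ((2 : F) • h)‖ ^ 2 +
          ‖fhat ψ f h‖ ^ 2 * ‖fhat ψ f ((3 : F) • h)‖ ^ 2)) +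
      2 * (∑ h ∈ Finset.univ.filter (fun h : Fin n → F => h ≠ 0),
        fhat ψ f h * fhat ψ f ((2 : F) • h) * fhat ψ f ((3 : F) • h) *
          fhat ψ f ((-6 : F) • h)).re :=
  cauchy_schwarz_fourier_bound_general hq ψ n f
end
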